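/- Let G be the graph obtained from ℤ^d with a rooted r-regular tree planted at each vertex (root degree r), and suppose p_c(ℤ^d) < p < 1/r. Then there exist ψ₁(p) < ∞ and ψ₂(p) > 0 such that for all n ≥ 1, exp(−ψ₁(p) n^{(d−1)/d}) ≤ P_p( n ≤ |C| < ∞ ) ≤ exp(−ψ₂(p) n^{(d−1)/d}), where C is the open cluster of the origin, GIVEN the following facts: (i) for supercritical percolation on ℤ^d, exp(−φ₁ n^{(d−1)/d}) ≤ P_p(n ≤ |C_{ℤ^d}| < ∞) ≤ exp(−φ₂ n^{(d−1)/d}); (ii) the total size of a subcritical Binomial(r,p) Galton–Watson tree has finite mean and finite exponential moments; (iii) conditioned on C_{ℤ^d}, the tree clusters at its vertices are i.i.d. subcritical Galton–Watson trees. -/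

import Mathlib

open MeasureTheory ProbabilityTheory Set
open scoped ENNReal

/-- The graph obtained from `ℤ^d` by planting at every vertex `x` a rooted infinite regular
tree (root degree `r`): the vertex `(x, l)` is the tree vertex with address `l` over `x`. -/
def treeLatticeGraph (d r : ℕ) : SimpleGraph ((Fin d → ℤ) × List (Fin r)) :=
  SimpleGraph.fromRel (fun u v =>
    (u.2 = [] ∧ v.2 = [] ∧ (∑ i : Fin d, |u.1 i - v.1 i|) = 1) ∨
    (u.1 = v.1 ∧ ∃ i : Fin r, v.2 = i :: u.2))

/-- The subgraph of open edges in the configuration `ω`. -/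
def openSubgraph {V : Type*} (G : SimpleGraph V) (ω : Sym2 V → Bool) : SimpleGraph V :=
  G.deleteEdges {e | ω e = false}

/-- `P` is i.i.d. Bernoulli(p) bond percolation on `G`. -/
def IsBernoulliPercolation {V : Type*} (G : SimpleGraph V) (p : ℝ≥0∞) (hp : p ≤ 1)
    (P : Measure (Sym2 V → Bool)) : Prop :=
  IsProbabilityMeasure P ∧
  iIndepFun
    (fun (e : G.edgeSet) (ω : Sym2 V → Bool) => ω (e : Sym2 V)) P ∧
  ∀ e : G.edgeSet, P.map (fun ω => ω (e : Sym2 V)) = (PMF.bernoulli p.toNNReal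
    (by simpa using ENNReal.toNNReal_mono ENNReal.one_ne_top hp)).toMeasure

/-- The open cluster `C` of the origin in the composite graph. -/
def clusterC (d r : ℕ) (ω : Sym2 ((Fin d → ℤ) × List (Fin r)) → Bool) :
    Set ((Fin d → ℤ) × List (Fin r)) :=
  {u | (openSubgraph (treeLatticeGraph d r) ω).Reachable ((fun _ => 0), []) u}

/-- The lattice part `C ∩ ℤ^d` of the cluster of the origin. -/
def clusterCZ (d r : ℕ) (ω : Sym2 ((Fin d → ℤ) × List (Fin r)) → Bool) :
    Set (Fin d → ℤ) :=
  {x | (openSubgraph (treeLatticeGraph d r) ω).Reachable ((fun _ => 0), []) (x, [])}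

/-- The tree cluster hanging at the lattice vertex `x`. -/
def treeCluster (d r : ℕ) (x : Fin d → ℤ) (ω : Sym2 ((Fin d → ℤ) × List (Fin r)) → Bool) :
    Set (List (Fin r)) :=
  {l | (openSubgraph (treeLatticeGraph d r) ω).Reachable (x, []) (x, l)}

/-! Since the trees are a.s. finite, `n ≤ |C_{ℤ^d}| < ∞` forces `n ≤ |C| < ∞`, which gives the
lower bound. For the upper bound take `m = ⌈εn⌉` with `ε > 0` small: either `m ≤ |C_{ℤ^d}| < ∞`,
of probability at most `exp (-φ₂ (εn)^((d-1)/d))`, or `C_{ℤ^d}` is a set `A` of fewer than `m`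
sites whose tree clusters, i.i.d. given `C_{ℤ^d} = A`, have total size at least `n`. By a Chernoff
bound the latter has probability at most `P(C_{ℤ^d} = A) e^{-sn} M^m`, `M` the exponential moment,
and summing over `A` leaves `e^{-sn} M^m ≤ M e^{-sn/2}`. The constant `1 + M` is absorbed into the
rate for large `n`; for small `n` use `P(n ≤ |C| < ∞) ≤ P(1 ≤ |C_{ℤ^d}| < ∞) ≤ exp (-φ₂)`. -/

section Measurability

variable {V : Type*} (G : SimpleGraph V)

lemma measurableSet_openSubgraph_adj (u v : V) :
    MeasurableSet {ω : Sym2 V → Bool | (openSubgraph G ω).Adj u v} := by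
  simp only [openSubgraph, SimpleGraph.deleteEdges_adj, Set.mem_ofPred_eq, Set.ofPred_and]
  exact (MeasurableSet.const _).inter
    ((measurableSet_singleton false).preimage (measurable_pi_apply _)).compl

lemma measurableSet_isChain_cons_openSubgraph (l : List V) (u : V) :
    MeasurableSet {ω : Sym2 V → Bool | (u :: l).IsChain (openSubgraph G ω).Adj} := by
  induction l generalizing u with
  | nil => simp
  | cons v l ih =>
    simp only [List.isChain_cons_cons, Set.ofPred_and]
    exact (measurableSet_openSubgraph_adj G u v).inter (ih v)

lemma measurableSet_reachable_openSubgraph [Countable V] (u v : V) :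
    MeasurableSet {ω : Sym2 V → Bool | (openSubgraph G ω).Reachable u v} := by
  have : {ω : Sym2 V → Bool | (openSubgraph G ω).Reachable u v} =
      ⋃ l ∈ {l : List V | (u :: l).getLast (List.cons_ne_nil _ _) = v},
        {ω | (u :: l).IsChain (openSubgraph G ω).Adj} := by
    ext ω
    simp only [Set.mem_ofPred_eq, Set.mem_iUnion, exists_prop,
      SimpleGraph.reachable_iff_reflTransGen]
    exact ⟨fun h => (List.exists_isChain_cons_of_relationReflTransGen h).imp fun _ h => h.symm,
      fun ⟨l, hl, hc⟩ => List.relationReflTransGen_of_exists_isChain_cons l hc hl⟩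
  rw [this]
  exact .biUnion (Set.to_countable _) fun l _ => measurableSet_isChain_cons_openSubgraph G l u

end Measurability

section Cluster

variable {d r : ℕ} {ω : Sym2 ((Fin d → ℤ) × List (Fin r)) → Bool}

lemma reachable_root_of_adj {u v : (Fin d → ℤ) × List (Fin r)}
    (h : (openSubgraph (treeLatticeGraph d r) ω).Adj u v) :
    (openSubgraph (treeLatticeGraph d r) ω).Reachable (u.1, []) (v.1, []) := by
  obtain ⟨a, l⟩ := u
  obtain ⟨b, k⟩ := v
  obtain (⟨rfl, rfl, -⟩ | ⟨rfl, -⟩) | (⟨rfl, rfl, -⟩ | ⟨rfl, -⟩) := h.1.2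
  all_goals first | exact h.reachable | exact .refl _

lemma reachable_root_of_reachable {u v : (Fin d → ℤ) × List (Fin r)}
    (h : (openSubgraph (treeLatticeGraph d r) ω).Reachable u v) :
    (openSubgraph (treeLatticeGraph d r) ω).Reachable (u.1, []) (v.1, []) := by
  rw [SimpleGraph.reachable_iff_reflTransGen] at h ⊢
  exact h.lift' (fun u => (u.1, [])) fun _ _ huv =>
    (SimpleGraph.reachable_iff_reflTransGen _ _).1 (reachable_root_of_adj huv)

lemma mem_clusterC_iff {x : Fin d → ℤ} {l : List (Fin r)} :
    (x, l) ∈ clusterC d r ω ↔ x ∈ clusterCZ d r ω ∧ l ∈ treeCluster d r x ω :=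
  ⟨fun h => ⟨reachable_root_of_reachable h, (reachable_root_of_reachable h).symm.trans h⟩,
    fun h => h.1.trans h.2⟩

lemma clusterC_eq_biUnion (ω : Sym2 ((Fin d → ℤ) × List (Fin r)) → Bool) :
    clusterC d r ω = ⋃ x ∈ clusterCZ d r ω, Prod.mk x '' treeCluster d r x ω := by
  ext ⟨x, l⟩
  simp [mem_clusterC_iff, and_comm]

lemma finite_clusterCZ (h : (clusterC d r ω).Finite) : (clusterCZ d r ω).Finite :=
  show ((·, ([] : List (Fin r))) ⁻¹' clusterC d r ω).Finite from
    h.preimage (Prod.mk_left_injective _).injOn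

lemma finite_clusterC (hZ : (clusterCZ d r ω).Finite)
    (hT : ∀ x ∈ clusterCZ d r ω, (treeCluster d r x ω).Finite) : (clusterC d r ω).Finite := by
  rw [clusterC_eq_biUnion]
  exact hZ.biUnion fun x hx => (hT x hx).image _

lemma ncard_clusterCZ_le (h : (clusterC d r ω).Finite) :
    (clusterCZ d r ω).ncard ≤ (clusterC d r ω).ncard :=
  Set.ncard_le_ncard_of_injOn (·, []) (fun _ hx => mem_clusterC_iff.2 ⟨hx, .refl _⟩)
    (Prod.mk_left_injective _).injOn h

lemma ncard_clusterC_le_sum {A : Finset (Fin d → ℤ)} (hA : clusterCZ d r ω = A) :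
    (clusterC d r ω).ncard ≤ ∑ x ∈ A, (treeCluster d r x ω).ncard := by
  rw [clusterC_eq_biUnion, hA]
  refine (A.set_ncard_biUnion_le _).trans_eq (Finset.sum_congr rfl fun x _ => ?_)
  exact Set.ncard_image_of_injective _ (Prod.mk_right_injective x)

lemma measurableSet_clusterCZ_eq (A : Set (Fin d → ℤ)) :
    MeasurableSet {ω : Sym2 ((Fin d → ℤ) × List (Fin r)) → Bool | clusterCZ d r ω = A} := by
  have : {ω : Sym2 ((Fin d → ℤ) × List (Fin r)) → Bool | clusterCZ d r ω = A} =
      ⋂ x, {ω | x ∈ clusterCZ d r ω ↔ x ∈ A} := by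
    ext ω
    simp [Set.ext_iff]
  rw [this]
  refine .iInter fun x => ?_
  by_cases hx : x ∈ A
  · simp only [hx, iff_true]
    exact measurableSet_reachable_openSubgraph _ _ _
  · simp only [hx, iff_false]
    exact (measurableSet_reachable_openSubgraph _ _ _).compl

end Cluster

theorem ENNReal.tsum_fin_prod_eq_pow {κ : Type*} (h : κ → ℝ≥0∞) :
    ∀ k : ℕ, ∑' g : Fin k → κ, ∏ i, h (g i) = (∑' j, h j) ^ k
  | 0 => by simp
  | k + 1 => by
    rw [← (Fin.consEquiv fun _ => κ).tsum_eq, ENNReal.tsum_prod', pow_succ',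
      ← ENNReal.tsum_fin_prod_eq_pow h k, ← ENNReal.tsum_mul_right]
    refine tsum_congr fun a => ?_
    simp [Fin.consEquiv, Fin.prod_univ_succ, ENNReal.tsum_mul_left]

theorem ENNReal.tsum_pi_prod_eq_pow {ι κ : Type*} [Fintype ι] (h : κ → ℝ≥0∞) :
    ∑' g : ι → κ, ∏ i, h (g i) = (∑' j, h j) ^ Fintype.card ι := by
  let e := Fintype.equivFin ι
  rw [← ENNReal.tsum_fin_prod_eq_pow, ← (e.arrowCongr (Equiv.refl κ)).tsum_eq]
  exact tsum_congr fun g => (e.symm.prod_comp fun i => h (g i)).symm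

lemma one_le_lintegral_ofReal_exp_mul (ν : Measure ℕ) [IsProbabilityMeasure ν] {s : ℝ}
    (hs : 0 ≤ s) : 1 ≤ ∫⁻ k, ENNReal.ofReal (Real.exp (s * k)) ∂ν :=
  calc (1 : ℝ≥0∞) = ∫⁻ _, 1 ∂ν := by simp
    _ ≤ _ := lintegral_mono fun k => ENNReal.one_le_ofReal.2 (Real.one_le_exp (by positivity))

lemma one_le_ofReal_exp_neg_mul_prod {ι : Type*} [Fintype ι] (g : ι → ℕ) {s : ℝ} (hs : 0 ≤ s)
    {n : ℕ} (hn : n ≤ ∑ i, g i) :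
    1 ≤ ENNReal.ofReal (Real.exp (-(s * n))) * ∏ i, ENNReal.ofReal (Real.exp (s * g i)) := by
  rw [← ENNReal.ofReal_prod_of_nonneg fun _ _ => (Real.exp_pos _).le, ← Real.exp_sum,
    ← ENNReal.ofReal_mul (Real.exp_pos _).le, ← Real.exp_add, ← Finset.mul_sum]
  have : (n : ℝ) ≤ ∑ i, (g i : ℝ) := by exact_mod_cast hn
  exact ENNReal.one_le_ofReal.2 (Real.one_le_exp (by nlinarith))

/-- Chernoff bound for a sum of variables that, on the event `E`, are i.i.d. with law `ν`. -/
lemma measure_inter_le_sum_le {Ω ι : Type*} [MeasurableSpace Ω] (P : Measure Ω)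
    (ν : Measure ℕ) (E : Set Ω) (X : ι → Ω → ℕ) (A : Finset ι)
    (hX : ∀ f : ι → Set ℕ, P (E ∩ {ω | ∀ i ∈ A, X i ω ∈ f i}) = P E * ∏ i ∈ A, ν (f i))
    {s : ℝ} (hs : 0 ≤ s) (n : ℕ) :
    P (E ∩ {ω | n ≤ ∑ i ∈ A, X i ω}) ≤
      P E * (ENNReal.ofReal (Real.exp (-(s * n))) *
        (∫⁻ k, ENNReal.ofReal (Real.exp (s * k)) ∂ν) ^ A.card) := by
  classical
  let single (g : A → ℕ) (i : ι) : Set ℕ := if h : i ∈ A then {g ⟨i, h⟩} else Set.univ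
  let F (g : A → ℕ) : Set Ω :=
    if n ≤ ∑ i, g i then E ∩ {ω | ∀ i ∈ A, X i ω ∈ single g i} else ∅
  have hcover : E ∩ {ω | n ≤ ∑ i ∈ A, X i ω} ⊆ ⋃ g, F g := by
    rintro ω ⟨hE, hn⟩
    have hsum : n ≤ ∑ i : A, X i ω := by rwa [Finset.sum_coe_sort A fun i => X i ω]
    refine Set.mem_iUnion.2 ⟨fun i => X i ω, ?_⟩
    simp only [F, if_pos hsum]
    exact ⟨hE, fun i hi => by simp [single, hi]⟩
  have hF (g : A → ℕ) : P (F g) ≤ P E * (ENNReal.ofReal (Real.exp (-(s * n))) *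
      ∏ i, (ENNReal.ofReal (Real.exp (s * g i)) * ν {g i})) := by
    by_cases hg : n ≤ ∑ i, g i
    · have hprod : ∏ i ∈ A, ν (single g i) = ∏ i, ν {g i} := by
        rw [← Finset.prod_coe_sort A]
        exact Finset.prod_congr rfl fun i _ => by simp [single]
      rw [show F g = E ∩ {ω | ∀ i ∈ A, X i ω ∈ single g i} from if_pos hg, hX, hprod,
        Finset.prod_mul_distrib, ← mul_assoc (ENNReal.ofReal _)]
      exact mul_le_mul_right (le_mul_of_one_le_left' (one_le_ofReal_exp_neg_mul_prod g hs hg)) _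
    · simp only [F, if_neg hg, measure_empty, zero_le]
  calc P (E ∩ {ω | n ≤ ∑ i ∈ A, X i ω}) ≤ ∑' g, P (F g) :=
        (measure_mono hcover).trans (measure_iUnion_le F)
    _ ≤ ∑' g : A → ℕ, P E * (ENNReal.ofReal (Real.exp (-(s * n))) *
          ∏ i, (ENNReal.ofReal (Real.exp (s * g i)) * ν {g i})) := ENNReal.tsum_le_tsum hF
    _ = _ := by
      rw [ENNReal.tsum_mul_left, ENNReal.tsum_mul_left,
        ENNReal.tsum_pi_prod_eq_pow fun j : ℕ => ENNReal.ofReal (Real.exp (s * j)) * ν {j},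
        Fintype.card_coe, lintegral_countable']

section Percolation

variable {d r : ℕ} (P : Measure (Sym2 ((Fin d → ℤ) × List (Fin r)) → Bool))

lemma tsum_measure_clusterCZ_eq_le_one [IsProbabilityMeasure P] :
    ∑' A : Finset (Fin d → ℤ), P {ω | clusterCZ d r ω = A} ≤ 1 := by
  rw [← measure_iUnion _ fun A => measurableSet_clusterCZ_eq _]
  · exact prob_le_one
  · exact fun A B hAB => Set.disjoint_left.2 fun ω hA hB =>
      hAB (Finset.coe_injective (hA.symm.trans hB))

lemma setOf_finite_clusterC_subset_union (m n : ℕ) :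
    {ω | (clusterC d r ω).Finite ∧ n ≤ (clusterC d r ω).ncard} ⊆
      {ω | (clusterCZ d r ω).Finite ∧ m ≤ (clusterCZ d r ω).ncard} ∪
        ⋃ (A : Finset (Fin d → ℤ)) (_ : A.card < m),
          {ω | clusterCZ d r ω = A} ∩ {ω | n ≤ ∑ x ∈ A, (treeCluster d r x ω).ncard} := by
  rintro ω ⟨hC, hn⟩
  have hZ := finite_clusterCZ hC
  by_cases hm : m ≤ (clusterCZ d r ω).ncard
  · exact Or.inl ⟨hZ, hm⟩
  · have hA : clusterCZ d r ω = hZ.toFinset := hZ.coe_toFinset.symm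
    refine Or.inr (Set.mem_iUnion₂.2 ⟨hZ.toFinset, ?_, hA, hn.trans (ncard_clusterC_le_sum hA)⟩)
    rw [← Set.ncard_eq_toFinset_card _ hZ]
    omega

lemma measure_finite_clusterC_le [IsProbabilityMeasure P] (ν : Measure ℕ)
    [IsProbabilityMeasure ν]
    (hcondiid : ∀ (A : Finset (Fin d → ℤ)) (f : (Fin d → ℤ) → Set ℕ),
      P {ω | clusterCZ d r ω = ↑A ∧ ∀ x ∈ A, (treeCluster d r x ω).ncard ∈ f x} =
        P {ω | clusterCZ d r ω = ↑A} * ∏ x ∈ A, ν (f x))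
    {s : ℝ} (hs : 0 ≤ s) (m n : ℕ) :
    P {ω | (clusterC d r ω).Finite ∧ n ≤ (clusterC d r ω).ncard} ≤
      P {ω | (clusterCZ d r ω).Finite ∧ m ≤ (clusterCZ d r ω).ncard} +
        ENNReal.ofReal (Real.exp (-(s * n))) *
          (∫⁻ k, ENNReal.ofReal (Real.exp (s * k)) ∂ν) ^ m := by
  set M := ∫⁻ k, ENNReal.ofReal (Real.exp (s * k)) ∂ν
  set c := ENNReal.ofReal (Real.exp (-(s * n)))
  have hA (A : Finset (Fin d → ℤ)) : P (⋃ (_ : A.card < m), {ω | clusterCZ d r ω = A} ∩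
      {ω | n ≤ ∑ x ∈ A, (treeCluster d r x ω).ncard}) ≤
        P {ω | clusterCZ d r ω = A} * (c * M ^ m) := by
    by_cases hAm : A.card < m
    · simp only [hAm, Set.iUnion_true]
      have hM : 1 ≤ M := one_le_lintegral_ofReal_exp_mul ν hs
      refine (measure_inter_le_sum_le P ν {ω | clusterCZ d r ω = A}
        (fun x ω => (treeCluster d r x ω).ncard) A (hcondiid A) hs n).trans ?_
      gcongr
    · simp [hAm]
  calc _ ≤ _ := (measure_mono (setOf_finite_clusterC_subset_union m n)).trans (measure_union_le _ _)
    _ ≤ P {ω | (clusterCZ d r ω).Finite ∧ m ≤ (clusterCZ d r ω).ncard} +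
          ∑' A : Finset (Fin d → ℤ), P {ω | clusterCZ d r ω = A} * (c * M ^ m) := by
      gcongr
      exact (measure_iUnion_le _).trans (ENNReal.tsum_le_tsum hA)
    _ ≤ _ := by
      rw [ENNReal.tsum_mul_right]
      exact add_le_add le_rfl (mul_le_of_le_one_left' (tsum_measure_clusterCZ_eq_le_one P))

lemma setOf_finite_clusterC_subset_one_le (n : ℕ) :
    {ω | (clusterC d r ω).Finite ∧ n ≤ (clusterC d r ω).ncard} ⊆
      {ω | (clusterCZ d r ω).Finite ∧ 1 ≤ (clusterCZ d r ω).ncard} := by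
  rintro ω ⟨hC, -⟩
  have hZ := finite_clusterCZ hC
  exact ⟨hZ, (Set.ncard_pos hZ).2 ⟨0, SimpleGraph.Reachable.refl _⟩⟩

lemma measure_finite_clusterCZ_le
    (htreefin : P {ω | ∃ x : Fin d → ℤ, (treeCluster d r x ω).Infinite} = 0) (n : ℕ) :
    P {ω | (clusterCZ d r ω).Finite ∧ n ≤ (clusterCZ d r ω).ncard} ≤
      P {ω | (clusterC d r ω).Finite ∧ n ≤ (clusterC d r ω).ncard} := by
  have hT : ∀ᵐ ω ∂P, ∀ x, (treeCluster d r x ω).Finite :=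
    ae_iff.2 (by simp_rw [not_forall]; exact htreefin)
  refine measure_mono_ae ?_
  filter_upwards [hT] with ω hT ⟨hZ, hn⟩
  have hC := finite_clusterC hZ fun x _ => hT x
  exact ⟨hC, hn.trans (ncard_clusterCZ_le hC)⟩

end Percolation

lemma exists_exp_add_exp_mul_pow_le {α φ s M : ℝ} (hα0 : 0 ≤ α) (hα1 : α ≤ 1) (hφ : 0 < φ)
    (hs : 0 < s) (hM : 1 ≤ M) :
    ∃ c > 0, ∀ n : ℕ, 1 ≤ n → ∃ m : ℕ, 1 ≤ m ∧
      Real.exp (-φ * m ^ α) + Real.exp (-(s * n)) * M ^ m ≤ (1 + M) * Real.exp (-c * n ^ α) := by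
  set L := Real.log M
  have hL : 0 ≤ L := Real.log_nonneg hM
  -- `ε` is small enough that `M ^ ⌈ε n⌉ ≤ M * exp (s n / 2)`.
  set ε := s / (2 * (L + 1))
  have hε : 0 < ε := by positivity
  have hεL : ε * L ≤ s / 2 := by
    rw [div_mul_eq_mul_div, div_le_div_iff₀ (by positivity) two_pos]
    nlinarith
  refine ⟨min (φ * ε ^ α) (s / 2), lt_min (by positivity) (by positivity), fun n hn => ?_⟩
  set c := min (φ * ε ^ α) (s / 2)
  have hn1 : (1 : ℝ) ≤ n := by exact_mod_cast hn
  have hnα : (n : ℝ) ^ α ≤ n :=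
    (Real.rpow_le_rpow_of_exponent_le hn1 hα1).trans_eq (Real.rpow_one _)
  set m := ⌈ε * n⌉₊
  have hm_ge : ε * n ≤ m := Nat.le_ceil _
  have hm_le : (m : ℝ) ≤ ε * n + 1 := (Nat.ceil_lt_add_one (by positivity)).le
  refine ⟨m, Nat.ceil_pos.2 (by positivity), ?_⟩
  have hφm : Real.exp (-φ * m ^ α) ≤ Real.exp (-c * n ^ α) := by
    have : c * n ^ α ≤ φ * m ^ α :=
      calc c * n ^ α ≤ φ * ε ^ α * n ^ α := by gcongr; exact min_le_left _ _
        _ = φ * (ε * n) ^ α := by rw [Real.mul_rpow hε.le (by positivity), mul_assoc]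
        _ ≤ φ * m ^ α := by gcongr
    exact Real.exp_le_exp.2 (by linarith)
  have hsm : Real.exp (-(s * n)) * M ^ m ≤ M * Real.exp (-c * n ^ α) := by
    have hexp : M = Real.exp L := (Real.exp_log (by linarith)).symm
    have hcn : c * n ^ α ≤ s / 2 * n :=
      (mul_le_mul_of_nonneg_right (min_le_right _ _) (by positivity)).trans (by gcongr)
    have hmL : m * L ≤ s / 2 * n + L :=
      calc m * L ≤ (ε * n + 1) * L := by gcongr
        _ = ε * L * n + L := by ring
        _ ≤ s / 2 * n + L := by gcongr
    rw [hexp, ← Real.exp_nat_mul, ← Real.exp_add, ← Real.exp_add]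
    exact Real.exp_le_exp.2 (by linarith)
  linarith

lemma exists_min_exp_le_exp {φ c K : ℝ} (hφ : 0 < φ) (hc : 0 < c) (hK : 0 < K) :
    ∃ ψ > 0, ∀ t : ℝ, 0 ≤ t →
      min (Real.exp (-φ)) (K * Real.exp (-c * t)) ≤ Real.exp (-ψ * t) := by
  set B := max 1 (2 * Real.log K / c)
  have hB : 0 < B := lt_max_of_lt_left one_pos
  refine ⟨min (c / 2) (φ / B), lt_min (by positivity) (by positivity), fun t ht => ?_⟩
  set ψ := min (c / 2) (φ / B)
  by_cases htB : B ≤ t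
  · have hlog : Real.log K ≤ c / 2 * t := by
      have := (le_max_right _ _).trans htB
      rw [div_le_iff₀ hc] at this
      linarith
    have hψt : ψ * t ≤ c / 2 * t := mul_le_mul_of_nonneg_right (min_le_left _ _) ht
    calc _ ≤ K * Real.exp (-c * t) := min_le_right _ _
      _ = Real.exp (Real.log K + -c * t) := by rw [Real.exp_add, Real.exp_log hK]
      _ ≤ Real.exp (-ψ * t) := Real.exp_le_exp.2 (by linarith)
  · have hψt : ψ * t ≤ φ :=
      calc ψ * t ≤ φ / B * B := by gcongr; exacts [min_le_right _ _, (not_le.1 htB).le]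
        _ = φ := div_mul_cancel₀ φ hB.ne'
    exact (min_le_left _ _).trans (Real.exp_le_exp.2 (by linarith))

theorem subexp_decay_intermediate_regime_general
    (d r : ℕ) (hd : 2 ≤ d)
    (p : ℝ≥0∞) (hp : p ≤ 1)
    (P : Measure (Sym2 ((Fin d → ℤ) × List (Fin r)) → Bool))
    (hP : IsBernoulliPercolation (treeLatticeGraph d r) p hp P)
    (φ₁ φ₂ : ℝ) (hφ₂ : 0 < φ₂)
    (hlattice : ∀ n : ℕ, 1 ≤ n →
      ENNReal.ofReal (Real.exp (-φ₁ * (n : ℝ) ^ (((d : ℝ) - 1) / d))) ≤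
          P {ω | (clusterCZ d r ω).Finite ∧ n ≤ (clusterCZ d r ω).ncard} ∧
        P {ω | (clusterCZ d r ω).Finite ∧ n ≤ (clusterCZ d r ω).ncard} ≤
          ENNReal.ofReal (Real.exp (-φ₂ * (n : ℝ) ^ (((d : ℝ) - 1) / d))))
    (ν : Measure ℕ) (hν : IsProbabilityMeasure ν)
    (s : ℝ) (hs : 0 < s)
    (hmom : ∫⁻ k, ENNReal.ofReal (Real.exp (s * k)) ∂ν < ⊤)
    (htreefin : P {ω | ∃ x : Fin d → ℤ, (treeCluster d r x ω).Infinite} = 0)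
    (hcondiid : ∀ (A : Finset (Fin d → ℤ)) (f : (Fin d → ℤ) → Set ℕ),
      P {ω | clusterCZ d r ω = ↑A ∧ ∀ x ∈ A, (treeCluster d r x ω).ncard ∈ f x} =
        P {ω | clusterCZ d r ω = ↑A} * ∏ x ∈ A, ν (f x)) :
    ∃ ψ₁ : ℝ, ∃ ψ₂ > (0 : ℝ), ∀ n : ℕ, 1 ≤ n →
      ENNReal.ofReal (Real.exp (-ψ₁ * (n : ℝ) ^ (((d : ℝ) - 1) / d))) ≤
          P {ω | (clusterC d r ω).Finite ∧ n ≤ (clusterC d r ω).ncard} ∧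
        P {ω | (clusterC d r ω).Finite ∧ n ≤ (clusterC d r ω).ncard} ≤
          ENNReal.ofReal (Real.exp (-ψ₂ * (n : ℝ) ^ (((d : ℝ) - 1) / d))) := by
  have := hP.1
  set α := ((d : ℝ) - 1) / d
  have hd' : (2 : ℝ) ≤ d := by exact_mod_cast hd
  have hα0 : 0 ≤ α := div_nonneg (by linarith) (Nat.cast_nonneg d)
  have hα1 : α ≤ 1 := div_le_one_of_le₀ (by linarith) (Nat.cast_nonneg d)
  set M := ∫⁻ k, ENNReal.ofReal (Real.exp (s * k)) ∂ν
  have hM : 1 ≤ M.toReal := by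
    simpa using ENNReal.toReal_mono hmom.ne (one_le_lintegral_ofReal_exp_mul ν hs.le)
  obtain ⟨c, hc, hcm⟩ := exists_exp_add_exp_mul_pow_le hα0 hα1 hφ₂ hs hM
  obtain ⟨ψ₂, hψ₂, hψ⟩ := exists_min_exp_le_exp hφ₂ hc (by linarith : 0 < 1 + M.toReal)
  refine ⟨φ₁, ψ₂, hψ₂, fun n hn =>
    ⟨(hlattice n hn).1.trans (measure_finite_clusterCZ_le P htreefin n), ?_⟩⟩
  obtain ⟨m, hm, hmn⟩ := hcm n hn
  set E := {ω | (clusterC d r ω).Finite ∧ n ≤ (clusterC d r ω).ncard}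
  have hsmall : P E ≤ ENNReal.ofReal (Real.exp (-φ₂)) :=
    (measure_mono (setOf_finite_clusterC_subset_one_le n)).trans
      ((hlattice 1 le_rfl).2.trans (by simp))
  have hlarge : P E ≤ ENNReal.ofReal ((1 + M.toReal) * Real.exp (-c * n ^ α)) :=
    calc P E ≤ _ := measure_finite_clusterC_le P ν hcondiid hs.le m n
      _ ≤ ENNReal.ofReal (Real.exp (-φ₂ * m ^ α)) +
            ENNReal.ofReal (Real.exp (-(s * n)) * M.toReal ^ m) := by
        rw [ENNReal.ofReal_mul (Real.exp_pos _).le, ENNReal.ofReal_pow ENNReal.toReal_nonneg,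
          ENNReal.ofReal_toReal hmom.ne]
        exact add_le_add (hlattice m hm).2 le_rfl
      _ ≤ _ := by
        rw [← ENNReal.ofReal_add (by positivity) (by positivity)]
        exact ENNReal.ofReal_le_ofReal hmn
  calc P E ≤ min _ _ := le_min hsmall hlarge
    _ = _ := (ENNReal.ofReal_min _ _).symm
    _ ≤ _ := ENNReal.ofReal_le_ofReal (hψ _ (by positivity))

/-- In the regime `p_c(ℤ^d) < p < 1/r`, the cluster of the origin of the
tree-decorated lattice satisfies the sub-exponential (stretched-exponential, exponent
`(d−1)/d`) two-sided bounds, GIVEN: (i) the analogous bounds for the lattice part `C_{ℤ^d}`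
of the cluster, (ii)–(iii) conditioned on `C_{ℤ^d}`, the tree clusters at its vertices are
i.i.d. with common (subcritical Galton–Watson total size) law `ν` having a finite exponential
moment, and the tree clusters are a.s. finite. -/
theorem subexp_decay_intermediate_regime
    (d r : ℕ) (hd : 2 ≤ d) (hr : 1 ≤ r)
    (p : ℝ≥0∞) (hp : p ≤ 1)
    (P : Measure (Sym2 ((Fin d → ℤ) × List (Fin r)) → Bool))
    (hP : IsBernoulliPercolation (treeLatticeGraph d r) p hp P)
    (φ₁ φ₂ : ℝ) (hφ₂ : 0 < φ₂)
    (hlattice : ∀ n : ℕ, 1 ≤ n →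
      ENNReal.ofReal (Real.exp (-φ₁ * (n : ℝ) ^ (((d : ℝ) - 1) / d))) ≤
          P {ω | (clusterCZ d r ω).Finite ∧ n ≤ (clusterCZ d r ω).ncard} ∧
        P {ω | (clusterCZ d r ω).Finite ∧ n ≤ (clusterCZ d r ω).ncard} ≤
          ENNReal.ofReal (Real.exp (-φ₂ * (n : ℝ) ^ (((d : ℝ) - 1) / d))))
    (ν : Measure ℕ) (hν : IsProbabilityMeasure ν)
    (s : ℝ) (hs : 0 < s)
    (hmom : ∫⁻ k, ENNReal.ofReal (Real.exp (s * k)) ∂ν < ⊤)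
    (htreefin : P {ω | ∃ x : Fin d → ℤ, (treeCluster d r x ω).Infinite} = 0)
    (hcondiid : ∀ (A : Finset (Fin d → ℤ)) (f : (Fin d → ℤ) → Set ℕ),
      P {ω | clusterCZ d r ω = ↑A ∧ ∀ x ∈ A, (treeCluster d r x ω).ncard ∈ f x} =
        P {ω | clusterCZ d r ω = ↑A} * ∏ x ∈ A, ν (f x)) :
    ∃ ψ₁ : ℝ, ∃ ψ₂ > (0 : ℝ), ∀ n : ℕ, 1 ≤ n →
      ENNReal.ofReal (Real.exp (-ψ₁ * (n : ℝ) ^ (((d : ℝ) - 1) / d))) ≤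
          P {ω | (clusterC d r ω).Finite ∧ n ≤ (clusterC d r ω).ncard} ∧
        P {ω | (clusterC d r ω).Finite ∧ n ≤ (clusterC d r ω).ncard} ≤
          ENNReal.ofReal (Real.exp (-ψ₂ * (n : ℝ) ^ (((d : ℝ) - 1) / d))) :=
  subexp_decay_intermediate_regime_general d r hd p hp P hP φ₁ φ₂ hφ₂ hlattice ν hν s hs hmom
    htreefin hcondiid
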